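/- Let n ≥ 6 and consider the cycle graph C_n on vertex set ZMod n. Color the three edges {0,1}, {2,3}, and {3,4} grey and all other edges black. Then the only color-preserving automorphism of this 2-colored graph is the identity. -/

import Mathlib

/-- A graph automorphism `φ` of `G` is color-preserving with respect to the
edge 2-coloring `col` (say `true` = grey, `false` = black) if every edge and
its image have the same color. -/
def IsColorPreserving {V : Type*} (G : SimpleGraph V) (col : Sym2 V → Bool)
    (φ : G ≃g G) : Prop :=
  ∀ u v : V, G.Adj u v → col s(φ u, φ v) = col s(u, v)

/-- For `n ≥ 3`, the cycle graph `Cₙ` on the vertex set `ZMod n`: `i` and `j`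
are adjacent if and only if `j = i + 1` or `i = j + 1`. -/
def cycleGraph (n : ℕ) (hn : 3 ≤ n) : SimpleGraph (ZMod n) where
  Adj i j := j = i + 1 ∨ i = j + 1
  symm := ⟨fun i j h => h.symm⟩
  loopless := by
    constructor
    intro i h
    haveI : Fact (1 < n) := ⟨by omega⟩
    have h1 : (0 : ZMod n) = 1 := by
      rcases h with h | h <;>
        · nth_rewrite 1 [show i = i + 0 by ring] at h
          exact add_left_cancel h
    exact zero_ne_one h1

/-!
An automorphism of the cycle `Cₙ` sends consecutive vertices to consecutive vertices, and it
cannot turn back since it is injective and `x + 2 ≠ x` for `n ≥ 3`; hence it is an affine map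
`x ↦ a + εx` with `ε = ±1`. Writing the grey edges as `{i, i + 1}` with `i ∈ {0, 2, 3}`, a
color-preserving rotation `x ↦ a + x` maps this set of starting points into itself, which for
`n ≥ 6` forces `a = 0`, while a reflection `x ↦ a - x` would have to map the starting points
`0, 2, 3` to the starting points `a - 1, a - 3, a - 4`, which no `a` achieves.
-/

lemma ZMod.natCast_eq_natCast_iff_of_lt {n a b : ℕ} (ha : a < n) (hb : b < n) :
    (a : ZMod n) = b ↔ a = b := by
  rw [ZMod.natCast_eq_natCast_iff', Nat.mod_eq_of_lt ha, Nat.mod_eq_of_lt hb]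

lemma ZMod.two_ne_zero_of_three_le {n : ℕ} (hn : 3 ≤ n) : (2 : ZMod n) ≠ 0 := by
  exact_mod_cast (ZMod.natCast_eq_natCast_iff_of_lt (a := 2) (b := 0) (by omega) (by omega)).not.2
    (by omega)

section Automorphisms

variable {n : ℕ} {hn : 3 ≤ n}

lemma cycleGraph_adj_iff {u v : ZMod n} :
    (cycleGraph n hn).Adj u v ↔ v - u = 1 ∨ v - u = -1 := by
  refine or_congr sub_eq_iff_eq_add'.symm ⟨fun h => ?_, fun h => ?_⟩ <;> linear_combination -h

lemma cycleGraph_adj_add_one (u : ZMod n) : (cycleGraph n hn).Adj u (u + 1) := Or.inl rfl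

theorem cycleGraph.exists_eq_affine (φ : cycleGraph n hn ≃g cycleGraph n hn) :
    ∃ ε : ZMod n, (ε = 1 ∨ ε = -1) ∧ ∀ x, φ x = φ 0 + ε * x := by
  have : NeZero n := ⟨by omega⟩
  have step (u : ZMod n) : φ (u + 1) - φ u = 1 ∨ φ (u + 1) - φ u = -1 :=
    cycleGraph_adj_iff.1 (φ.map_adj_iff.2 (cycleGraph_adj_add_one u))
  have step_const (u : ZMod n) : φ (u + 1 + 1) - φ (u + 1) = φ (u + 1) - φ u := by
    have no_return : φ (u + 1 + 1) ≠ φ u := fun h =>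
      ZMod.two_ne_zero_of_three_le hn (by linear_combination φ.injective h)
    rcases step (u + 1) with h₁ | h₁ <;> rcases step u with h₀ | h₀
    · rw [h₁, h₀]
    · exact absurd (by linear_combination h₁ + h₀) no_return
    · exact absurd (by linear_combination h₁ + h₀) no_return
    · rw [h₁, h₀]
  refine ⟨φ 1 - φ 0, by simpa using step 0, fun x => ?_⟩
  have diff (k : ℕ) : φ ((k : ZMod n) + 1) - φ k = φ 1 - φ 0 := by
    induction k with
    | zero => simp
    | succ k ih => rw [← ih, Nat.cast_succ, step_const]
  have affine (k : ℕ) : φ k = φ 0 + (φ 1 - φ 0) * k := by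
    induction k with
    | zero => simp
    | succ k ih => push_cast; linear_combination diff k + ih
  rw [← ZMod.natCast_zmod_val x]
  exact affine x.val

end Automorphisms

section Coloring

variable {n : ℕ}

def greyColoring (n : ℕ) (e : Sym2 (ZMod n)) : Bool :=
  decide (e = s((0 : ZMod n), 1) ∨ e = s((2 : ZMod n), 3) ∨ e = s((3 : ZMod n), 4))

def IsGreyStart (x : ZMod n) : Prop := x = 0 ∨ x = 2 ∨ x = 3

lemma sym2_add_one_inj (hn : 3 ≤ n) {x y : ZMod n} : s(x, x + 1) = s(y, y + 1) ↔ x = y := by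
  refine ⟨fun h => ?_, fun h => h ▸ rfl⟩
  rcases Sym2.eq_iff.1 h with ⟨h, -⟩ | ⟨h₁, h₂⟩
  · exact h
  · exact absurd (by linear_combination h₂ - h₁) (ZMod.two_ne_zero_of_three_le hn)

lemma greyColoring_add_one (hn : 3 ≤ n) (x : ZMod n) :
    greyColoring n s(x, x + 1) = true ↔ IsGreyStart x := by
  have h₁ : s((0 : ZMod n), 1) = s(0, 0 + 1) := by rw [zero_add]
  have h₃ : s((2 : ZMod n), 3) = s(2, 2 + 1) := by norm_num
  have h₄ : s((3 : ZMod n), 4) = s(3, 3 + 1) := by norm_num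
  rw [greyColoring, decide_eq_true_iff, h₁, h₃, h₄, sym2_add_one_inj hn, sym2_add_one_inj hn,
    sym2_add_one_inj hn, IsGreyStart]

lemma isGreyStart_of_isColorPreserving (hn : 3 ≤ n) {φ : cycleGraph n hn ≃g cycleGraph n hn}
    (hφ : IsColorPreserving (cycleGraph n hn) (greyColoring n) φ) {x w : ZMod n}
    (hx : IsGreyStart x) (hw : s(φ x, φ (x + 1)) = s(w, w + 1)) : IsGreyStart w := by
  have h := hφ x (x + 1) (cycleGraph_adj_add_one x)
  rw [hw] at h
  exact (greyColoring_add_one hn w).1 (h.trans ((greyColoring_add_one hn x).2 hx))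

lemma not_isGreyStart_natCast (hn : 6 ≤ n) {k : ℕ} (hk : k = 1 ∨ k = 4 ∨ k = 5) :
    ¬ IsGreyStart (k : ZMod n) := by
  have ne (j : ℕ) (hj : j = 0 ∨ j = 2 ∨ j = 3) : (k : ZMod n) ≠ j := fun h => by
    have := (ZMod.natCast_eq_natCast_iff_of_lt (by omega) (by omega)).1 h
    omega
  rintro (h | h | h)
  · exact ne 0 (by omega) (by exact_mod_cast h)
  · exact ne 2 (by omega) (by exact_mod_cast h)
  · exact ne 3 (by omega) (by exact_mod_cast h)

lemma eq_zero_of_isGreyStart_of_isGreyStart_add_two (hn : 6 ≤ n) {a : ZMod n}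
    (ha : IsGreyStart a) (ha₂ : IsGreyStart (a + 2)) : a = 0 := by
  rcases ha with rfl | rfl | rfl
  · rfl
  · exact (not_isGreyStart_natCast hn (k := 4) (by omega) (by convert ha₂ using 1; norm_num)).elim
  · exact (not_isGreyStart_natCast hn (k := 5) (by omega) (by convert ha₂ using 1; norm_num)).elim

lemma not_isGreyStart_sub_one_sub_three_sub_four (hn : 6 ≤ n) (a : ZMod n) :
    ¬ (IsGreyStart (a - 1) ∧ IsGreyStart (a - 3) ∧ IsGreyStart (a - 4)) := by
  rintro ⟨h₁, h₃, h₄⟩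
  obtain ⟨b, rfl⟩ : ∃ b, a = b + 4 := ⟨a - 4, by ring⟩
  rw [add_sub_cancel_right] at h₄
  rcases h₄ with rfl | rfl | rfl
  · exact not_isGreyStart_natCast hn (k := 1) (by omega) (by convert h₃ using 1; norm_num)
  · exact not_isGreyStart_natCast hn (k := 5) (by omega) (by convert h₁ using 1; norm_num)
  · exact not_isGreyStart_natCast hn (k := 4) (by omega) (by convert h₃ using 1; norm_num)

end Coloring

/-- Let `n ≥ 6` and color the edges `{0,1}`, `{2,3}` and `{3,4}` of the cycle
graph `Cₙ` grey and all other edges black.  Then the only color-preserving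
automorphism of this 2-colored graph is the identity. -/
theorem stmt_5 (n : ℕ) (hn : 6 ≤ n)
    (φ : cycleGraph n (by omega) ≃g cycleGraph n (by omega))
    (hφ : IsColorPreserving (cycleGraph n (by omega))
      (fun e => decide
        (e = s((0 : ZMod n), 1) ∨ e = s((2 : ZMod n), 3) ∨ e = s((3 : ZMod n), 4))) φ) :
    ∀ x, φ x = x := by
  obtain ⟨ε, hε, hφx⟩ := cycleGraph.exists_eq_affine φ
  have grey {x w : ZMod n} (hx : IsGreyStart x) (hw : s(φ x, φ (x + 1)) = s(w, w + 1)) :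
      IsGreyStart w :=
    isGreyStart_of_isColorPreserving (by omega) hφ hx hw
  rcases hε with rfl | rfl
  · have image (x : ZMod n) : s(φ x, φ (x + 1)) = s(φ 0 + x, φ 0 + x + 1) := by
      rw [hφx x, hφx (x + 1), one_mul, one_mul, add_assoc]
    have h₀ := grey (Or.inl rfl) (image 0)
    have h₂ := grey (Or.inr (Or.inl rfl)) (image 2)
    rw [add_zero] at h₀
    have ha := eq_zero_of_isGreyStart_of_isGreyStart_add_two hn h₀ h₂
    intro x
    rw [hφx x, ha, zero_add, one_mul]
  · have image (x : ZMod n) : s(φ x, φ (x + 1)) = s(φ 0 - (x + 1), φ 0 - (x + 1) + 1) := by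
      rw [hφx x, hφx (x + 1), Sym2.eq_swap]
      exact congrArg₂ (fun a b => s(a, b)) (by ring) (by ring)
    have h₁ := grey (Or.inl rfl) (image 0)
    have h₃ := grey (Or.inr (Or.inl rfl)) (image 2)
    have h₄ := grey (Or.inr (Or.inr rfl)) (image 3)
    norm_num at h₁ h₃ h₄
    exact (not_isGreyStart_sub_one_sub_three_sub_four hn (φ 0) ⟨h₁, h₃, h₄⟩).elim
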